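/- ∀HyperLTL is strictly less expressive than PBC(∀HyperLTL): there is a PBC(∀HyperLTL) sentence (e.g., ∀π.p_π ∨ ∀π.¬p_π) not equivalent to any ∀HyperLTL sentence, because every ∀HyperLTL sentence ∀π.φ(π) defines a flat (closed under unions of satisfying singletons) trace-set property, while ∀π.p_π ∨ ∀π.¬p_π does not. -/

import Mathlib

/-- A trace over `AP`: an infinite sequence of sets of atomic propositions. -/
def Trace (AP : Type) := ℕ → Set AP

/-- The suffix `t[i,∞]` of a trace. -/
def Trace.shift {AP : Type} (t : Trace AP) (i : ℕ) : Trace AP := fun n => t (n + i)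

/-- `T[f,∞] = {t[s,∞] | t ∈ T, s ∈ f(t)}`. -/
def teamShift {AP : Type} (T : Set (Trace AP)) (f : Trace AP → Set ℕ) : Set (Trace AP) :=
  {s | ∃ t ∈ T, ∃ i ∈ f t, s = t.shift i}

/-- `f : T → 𝒫(ℕ)⁺`: assigns a nonempty set of time steps to every trace of the team. -/
def goodF {AP : Type} (T : Set (Trace AP)) (f : Trace AP → Set ℕ) : Prop :=
  ∀ t ∈ T, (f t).Nonempty

/-- The ordering `f' < f` on choice functions (on the domain `T'`). -/
def fLT {AP : Type} (T' : Set (Trace AP)) (f' f : Trace AP → Set ℕ) : Prop :=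
  ∀ t ∈ T', sInf (f' t) ≤ sInf (f t) ∧
    ∀ m, IsGreatest (f t) m → ∃ m', IsGreatest (f' t) m' ∧ m' < m

/-- Formulas of (NNF) LTL, extended with the Boolean disjunction `boolOr` (⊕)
and the Boolean negation `bNeg` (∼). -/
inductive TForm (AP : Type) where
  | pos : AP → TForm AP
  | neg : AP → TForm AP
  | and : TForm AP → TForm AP → TForm AP
  | or : TForm AP → TForm AP → TForm AP
  | boolOr : TForm AP → TForm AP → TForm AP
  | bNeg : TForm AP → TForm AP
  | next : TForm AP → TForm AP
  | glob : TForm AP → TForm AP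
  | untl : TForm AP → TForm AP → TForm AP

/-- Plain LTL formulas (negation normal form; no ⊕, no ∼). -/
def TForm.isLTL {AP : Type} : TForm AP → Prop
  | .pos _ => True
  | .neg _ => True
  | .and φ ψ => φ.isLTL ∧ ψ.isLTL
  | .or φ ψ => φ.isLTL ∧ ψ.isLTL
  | .boolOr _ _ => False
  | .bNeg _ => False
  | .next φ => φ.isLTL
  | .glob φ => φ.isLTL
  | .untl φ ψ => φ.isLTL ∧ ψ.isLTL

/-- TeamLTL(⊕) formulas: no Boolean negation. -/
def TForm.noBNeg {AP : Type} : TForm AP → Prop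
  | .pos _ => True
  | .neg _ => True
  | .and φ ψ => φ.noBNeg ∧ ψ.noBNeg
  | .or φ ψ => φ.noBNeg ∧ ψ.noBNeg
  | .boolOr φ ψ => φ.noBNeg ∧ ψ.noBNeg
  | .bNeg _ => False
  | .next φ => φ.noBNeg
  | .glob φ => φ.noBNeg
  | .untl φ ψ => φ.noBNeg ∧ ψ.noBNeg

/-- Ordinary single-trace LTL satisfaction (⊕ read as ∨ and ∼ as ¬). -/
def TForm.sat {AP : Type} : Trace AP → TForm AP → Prop
  | t, .pos p => p ∈ t 0
  | t, .neg p => p ∉ t 0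
  | t, .and φ ψ => TForm.sat t φ ∧ TForm.sat t ψ
  | t, .or φ ψ => TForm.sat t φ ∨ TForm.sat t ψ
  | t, .boolOr φ ψ => TForm.sat t φ ∨ TForm.sat t ψ
  | t, .bNeg φ => ¬ TForm.sat t φ
  | t, .next φ => TForm.sat (t.shift 1) φ
  | t, .glob φ => ∀ i, TForm.sat (t.shift i) φ
  | t, .untl φ ψ => ∃ i, TForm.sat (t.shift i) ψ ∧ ∀ j < i, TForm.sat (t.shift j) φ

/-- Lax team semantics of TeamLTL(⊕,∼). -/
def TForm.teamSat {AP : Type} : Set (Trace AP) → TForm AP → Prop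
  | T, .pos p => ∀ t ∈ T, p ∈ t 0
  | T, .neg p => ∀ t ∈ T, p ∉ t 0
  | T, .and φ ψ => TForm.teamSat T φ ∧ TForm.teamSat T ψ
  | T, .or φ ψ => ∃ T₁ T₂, T₁ ∪ T₂ = T ∧ TForm.teamSat T₁ φ ∧ TForm.teamSat T₂ ψ
  | T, .boolOr φ ψ => TForm.teamSat T φ ∨ TForm.teamSat T ψ
  | T, .bNeg φ => ¬ TForm.teamSat T φ
  | T, .next φ => TForm.teamSat (teamShift T (fun _ => {1})) φ
  | T, .glob φ => ∀ f, goodF T f → TForm.teamSat (teamShift T f) φ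
  | T, .untl φ ψ => ∃ f, goodF T f ∧ TForm.teamSat (teamShift T f) ψ ∧
      ∀ f', goodF {t ∈ T | ¬ IsGreatest (f t) 0} f' →
        fLT {t ∈ T | ¬ IsGreatest (f t) 0} f' f →
        ({t ∈ T | ¬ IsGreatest (f t) 0} = (∅ : Set (Trace AP)) ∨
          TForm.teamSat (teamShift {t ∈ T | ¬ IsGreatest (f t) 0} f') φ)

/-- HyperLTL formulas (quantifiers may occur anywhere). -/
inductive HForm (AP V : Type) where
  | atom : AP → V → HForm AP V
  | hnot : HForm AP V → HForm AP V
  | hand : HForm AP V → HForm AP V → HForm AP V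
  | hor : HForm AP V → HForm AP V → HForm AP V
  | hnext : HForm AP V → HForm AP V
  | hglob : HForm AP V → HForm AP V
  | huntl : HForm AP V → HForm AP V → HForm AP V
  | hall : V → HForm AP V → HForm AP V
  | hex : V → HForm AP V → HForm AP V

/-- Shift a trace assignment: `Π[i,∞]`. -/
def shiftA {AP V : Type} (A : V → Trace AP) (i : ℕ) : V → Trace AP := fun v => (A v).shift i

/-- HyperLTL satisfaction `Π ⊨_T φ`. -/
def HForm.hsat {AP V : Type} [DecidableEq V] :
    (V → Trace AP) → Set (Trace AP) → HForm AP V → Prop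
  | A, _, .atom a v => a ∈ A v 0
  | A, T, .hnot φ => ¬ HForm.hsat A T φ
  | A, T, .hand φ ψ => HForm.hsat A T φ ∧ HForm.hsat A T ψ
  | A, T, .hor φ ψ => HForm.hsat A T φ ∨ HForm.hsat A T ψ
  | A, T, .hnext φ => HForm.hsat (shiftA A 1) T φ
  | A, T, .hglob φ => ∀ i, HForm.hsat (shiftA A i) T φ
  | A, T, .huntl φ ψ => ∃ i, HForm.hsat (shiftA A i) T ψ ∧
      ∀ j < i, HForm.hsat (shiftA A j) T φ
  | A, T, .hall v φ => ∀ t ∈ T, HForm.hsat (Function.update A v t) T φ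
  | A, T, .hex v φ => ∃ t ∈ T, HForm.hsat (Function.update A v t) T φ

/-- Quantifier-free HyperLTL formulas. -/
def HForm.QFree {AP V : Type} : HForm AP V → Prop
  | .atom _ _ => True
  | .hnot φ => φ.QFree
  | .hand φ ψ => φ.QFree ∧ ψ.QFree
  | .hor φ ψ => φ.QFree ∧ ψ.QFree
  | .hnext φ => φ.QFree
  | .hglob φ => φ.QFree
  | .huntl φ ψ => φ.QFree ∧ ψ.QFree
  | .hall _ _ => False
  | .hex _ _ => False

/-- All trace variables occurring in a HyperLTL formula. -/
def HForm.vars {AP V : Type} : HForm AP V → Set V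
  | .atom _ v => {v}
  | .hnot φ => φ.vars
  | .hand φ ψ => φ.vars ∪ ψ.vars
  | .hor φ ψ => φ.vars ∪ ψ.vars
  | .hnext φ => φ.vars
  | .hglob φ => φ.vars
  | .huntl φ ψ => φ.vars ∪ ψ.vars
  | .hall v φ => insert v φ.vars
  | .hex v φ => insert v φ.vars

/-- Free trace variables of a HyperLTL formula. -/
def HForm.free {AP V : Type} : HForm AP V → Set V
  | .atom _ v => {v}
  | .hnot φ => φ.free
  | .hand φ ψ => φ.free ∪ ψ.free
  | .hor φ ψ => φ.free ∪ ψ.free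
  | .hnext φ => φ.free
  | .hglob φ => φ.free
  | .huntl φ ψ => φ.free ∪ ψ.free
  | .hall v φ => φ.free \ {v}
  | .hex v φ => φ.free \ {v}

/-- Rename the trace variables of a HyperLTL formula. -/
def HForm.rename {AP V : Type} (ρ : V → V) : HForm AP V → HForm AP V
  | .atom a v => .atom a (ρ v)
  | .hnot φ => .hnot (φ.rename ρ)
  | .hand φ ψ => .hand (φ.rename ρ) (ψ.rename ρ)
  | .hor φ ψ => .hor (φ.rename ρ) (ψ.rename ρ)
  | .hnext φ => .hnext (φ.rename ρ)
  | .hglob φ => .hglob (φ.rename ρ)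
  | .huntl φ ψ => .huntl (φ.rename ρ) (ψ.rename ρ)
  | .hall v φ => .hall (ρ v) (φ.rename ρ)
  | .hex v φ => .hex (ρ v) (φ.rename ρ)

/-- Hyperification `φ ↦ φ(π)`: replace each proposition `p` by `p_π`. -/
def TForm.hyperify {AP V : Type} (π : V) : TForm AP → HForm AP V
  | .pos p => .atom p π
  | .neg p => .hnot (.atom p π)
  | .and φ ψ => .hand (φ.hyperify π) (ψ.hyperify π)
  | .or φ ψ => .hor (φ.hyperify π) (ψ.hyperify π)
  | .boolOr φ ψ => .hor (φ.hyperify π) (ψ.hyperify π)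
  | .bNeg φ => .hnot (φ.hyperify π)
  | .next φ => .hnext (φ.hyperify π)
  | .glob φ => .hglob (φ.hyperify π)
  | .untl φ ψ => .huntl (φ.hyperify π) (ψ.hyperify π)

/-- A tautological NNF LTL formula. -/
def TForm.verum {AP : Type} [Inhabited AP] : TForm AP := .or (.pos default) (.neg default)

/-- Negation normal form of the (classical) negation of an NNF LTL formula. -/
def TForm.dual {AP : Type} [Inhabited AP] : TForm AP → TForm AP
  | .pos p => .neg p
  | .neg p => .pos p
  | .and φ ψ => .or φ.dual ψ.dual
  | .or φ ψ => .and φ.dual ψ.dual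
  | .boolOr φ ψ => .and φ.dual ψ.dual
  | .bNeg φ => φ
  | .next φ => .next φ.dual
  | .glob φ => .untl TForm.verum φ.dual
  | .untl φ ψ => .or (.glob ψ.dual) (.untl ψ.dual (.and φ.dual ψ.dual))

/-- The shorthand `∃β := ∼β^d`. -/
def TForm.tExists {AP : Type} [Inhabited AP] (β : TForm AP) : TForm AP := .bNeg β.dual

mutual
/-- Erase trace-variable subscripts: turn a quantifier-free HyperLTL formula into
an (NNF) LTL formula, pushing classical negations inward. -/
def deH {AP V : Type} [Inhabited AP] : HForm AP V → TForm AP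
  | .atom a _ => .pos a
  | .hnot φ => deHn φ
  | .hand φ ψ => .and (deH φ) (deH ψ)
  | .hor φ ψ => .or (deH φ) (deH ψ)
  | .hnext φ => .next (deH φ)
  | .hglob φ => .glob (deH φ)
  | .huntl φ ψ => .untl (deH φ) (deH ψ)
  | .hall _ φ => deH φ
  | .hex _ φ => deH φ

/-- NNF of the negation of an erased quantifier-free HyperLTL formula. -/
def deHn {AP V : Type} [Inhabited AP] : HForm AP V → TForm AP
  | .atom a _ => .neg a
  | .hnot φ => deH φ
  | .hand φ ψ => .or (deHn φ) (deHn ψ)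
  | .hor φ ψ => .and (deHn φ) (deHn ψ)
  | .hnext φ => .next (deHn φ)
  | .hglob φ => .untl TForm.verum (deHn φ)
  | .huntl φ ψ => .or (.glob (deHn ψ)) (.untl (deHn ψ) (.and (deHn φ) (deHn ψ)))
  | .hall _ φ => deHn φ
  | .hex _ φ => deHn φ
end

/-- `φ₀ ∨ φ₁ ∨ ⋯ ∨ φₘ` for a nonempty family of HyperLTL formulas. -/
def HForm.bigOrF {AP V : Type} {m : ℕ} (f : Fin (m + 1) → HForm AP V) : HForm AP V :=
  (List.ofFn fun i : Fin m => f i.succ).foldr .hor (f 0)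

/-- `φ₀ ∧ φ₁ ∧ ⋯ ∧ φₘ` for a nonempty family of HyperLTL formulas. -/
def HForm.bigAndF {AP V : Type} {m : ℕ} (f : Fin (m + 1) → HForm AP V) : HForm AP V :=
  (List.ofFn fun i : Fin m => f i.succ).foldr .hand (f 0)

/-- `φ₀ ⊕ φ₁ ⊕ ⋯ ⊕ φₘ` for a nonempty family of team formulas. -/
def TForm.bigBoolOrF {AP : Type} {m : ℕ} (f : Fin (m + 1) → TForm AP) : TForm AP :=
  (List.ofFn fun i : Fin m => f i.succ).foldr .boolOr (f 0)

/-- `φ₀ ∧ φ₁ ∧ ⋯ ∧ φₘ` for a nonempty family of team formulas. -/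
def TForm.bigAndF {AP : Type} {m : ℕ} (f : Fin (m + 1) → TForm AP) : TForm AP :=
  (List.ofFn fun i : Fin m => f i.succ).foldr .and (f 0)

/-- Apply a quantifier block (`true` = ∀, `false` = ∃). -/
def applyBlock {AP V : Type} (qs : List (Bool × V)) (φ : HForm AP V) : HForm AP V :=
  qs.foldr (fun q acc => if q.1 then .hall q.2 acc else .hex q.2 acc) φ

/-- The dual of a quantifier block. -/
def dualBlock {V : Type} (qs : List (Bool × V)) : List (Bool × V) :=
  qs.map fun q => (!q.1, q.2)

/-! A quantifier-free formula does not look at the team, so `∀π.ψ` holds in a team exactly when it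
holds in each singleton subteam: it defines a flat property. The sentence `∀π.p_π ∨ ∀π.¬p_π` is
not flat: it holds in `{t}` for every trace `t`, but fails in a team containing one trace with `p`
at position `0` and one without. -/

def IsFlat {AP : Type} (P : Set (Trace AP) → Prop) : Prop :=
  ∀ T, P T ↔ ∀ t ∈ T, P {t}

namespace HForm

variable {AP V : Type} [DecidableEq V]

theorem hsat_team_congr_of_QFree {ψ : HForm AP V} (hψ : ψ.QFree) (A : V → Trace AP)
    (T T' : Set (Trace AP)) : ψ.hsat A T ↔ ψ.hsat A T' := by
  induction ψ generalizing A with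
  | atom => rfl
  | hnot φ ih => exact not_congr (ih hψ A)
  | hand φ χ ihφ ihχ => exact and_congr (ihφ hψ.1 A) (ihχ hψ.2 A)
  | hor φ χ ihφ ihχ => exact or_congr (ihφ hψ.1 A) (ihχ hψ.2 A)
  | hnext φ ih => exact ih hψ _
  | hglob φ ih => exact forall_congr' fun i => ih hψ _
  | huntl φ χ ihφ ihχ =>
      exact exists_congr fun i => and_congr (ihχ hψ.2 _)
        (forall₂_congr fun j _ => ihφ hψ.1 _)
  | hall | hex => exact hψ.elim

theorem isFlat_hsat_hall_of_QFree {ψ : HForm AP V} (hψ : ψ.QFree) (A : V → Trace AP) (π : V) :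
    IsFlat fun T => (hall π ψ).hsat A T := by
  intro T
  simp only [hsat, Set.mem_singleton_iff, forall_eq]
  exact forall₂_congr fun t _ => hsat_team_congr_of_QFree hψ _ T {t}

@[simp]
theorem hsat_hall_atom_self (A : V → Trace AP) (T : Set (Trace AP)) (p : AP) (π : V) :
    (hall π (atom p π)).hsat A T ↔ ∀ t ∈ T, p ∈ t 0 := by
  simp [hsat]

@[simp]
theorem hsat_hall_hnot_atom_self (A : V → Trace AP) (T : Set (Trace AP)) (p : AP) (π : V) :
    (hall π (hnot (atom p π))).hsat A T ↔ ∀ t ∈ T, p ∉ t 0 := by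
  simp [hsat]

theorem not_isFlat_hsat_all_or_all_not (A : V → Trace AP) (p : AP) (π : V) :
    ¬ IsFlat fun T => (hor (hall π (atom p π)) (hall π (hnot (atom p π)))).hsat A T := by
  intro hflat
  let tp : Trace AP := fun _ => {p}
  let tq : Trace AP := fun _ => ∅
  have hsingletons : ∀ t ∈ ({tp, tq} : Set (Trace AP)),
      (hor (hall π (atom p π)) (hall π (hnot (atom p π)))).hsat A {t} := fun t _ => by
    simpa [hsat] using em (p ∈ t 0)
  rcases (hflat {tp, tq}).2 hsingletons with hp_everywhere | hnp_everywhere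
  · exact (hsat_hall_atom_self A _ p π).1 hp_everywhere tq (by simp)
  · exact (hsat_hall_hnot_atom_self A _ p π).1 hnp_everywhere tp (by simp) rfl

end HForm

/-- ∀HyperLTL < PBC(∀HyperLTL): the PBC(∀HyperLTL) sentence
`∀π.p_π ∨ ∀π.¬p_π` is not equivalent to any one-variable universal
HyperLTL sentence `∀π.ψ`. -/
theorem forall_hyperLTL_strictly_weaker :
    ∀ ψ : HForm Unit Unit, ψ.QFree →
      ¬ (∀ (T : Set (Trace Unit)) (A : Unit → Trace Unit),
          HForm.hsat A T (.hall () ψ) ↔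
            HForm.hsat A T
              (.hor (.hall () (.atom () ()))
                (.hall () (.hnot (.atom () ()))))) := by
  intro ψ hψ hequiv
  let A : Unit → Trace Unit := fun _ _ => ∅
  have hsame : (fun T => (HForm.hall () ψ).hsat A T) =
      fun T => (HForm.hor (.hall () (.atom () ())) (.hall () (.hnot (.atom () ())))).hsat A T :=
    funext fun T => propext (hequiv T A)
  exact HForm.not_isFlat_hsat_all_or_all_not A () ()
    (hsame ▸ HForm.isFlat_hsat_hall_of_QFree hψ A ())
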